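/- Fix x_h, x_l > 0, θ = x_l/(x_h+x_l), b ∈ (0,1), r ∈ [0,1]. Define U_h = z_0(x_h+x_l)(1-r) + z_0(x_h)(1-z_0(x_l))(1-b) and U_l = z_0(x_h+x_l)(1-r) + z_0(x_h)(1-z_0(x_l)-z_1(x_l))(1-b)/x_l, and Π_s = z_1(x_h+x_l)·r + 1 - z_0(x_h) - z_1(x_h) + b[z_0(x_h)+z_1(x_h)-z_0(x_h+x_l)-z_1(x_h+x_l)]. Then Π_s = 1 - z_0(x_h+x_l) - x_h·U_h - x_l·U_l. -/
import Mathlib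

noncomputable def z (n : ℕ) (x : ℝ) : ℝ := Real.exp (-x) * x ^ n / n.factorial

theorem standard_auction_profit_identity (xh xl b r : ℝ)
    (hxh : 0 < xh) (hxl : 0 < xl) (hb : b ∈ Set.Ioo (0 : ℝ) 1)
    (hr : r ∈ Set.Icc (0 : ℝ) 1) :
    z 1 (xh + xl) * r + 1 - z 0 xh - z 1 xh
        + b * (z 0 xh + z 1 xh - z 0 (xh + xl) - z 1 (xh + xl))
      = 1 - z 0 (xh + xl)
        - xh * (z 0 (xh + xl) * (1 - r) + z 0 xh * (1 - z 0 xl) * (1 - b))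
        - xl * (z 0 (xh + xl) * (1 - r)
            + z 0 xh * (1 - z 0 xl - z 1 xl) * (1 - b) / xl) := by
  have h : Real.exp (-(xh + xl)) = Real.exp (-xh) * Real.exp (-xl) := by
    rw [neg_add, Real.exp_add]
  simp only [z, h, Nat.factorial]
  field_simp
  ring
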